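/- arXiv:1010.6191 — 3 statements merged into one kernel-verified Lean document; each statement's English description precedes it below -/
import Mathlib

section
/- (Continuity claim / weight coalescence) Let μ be a nice probability measure on R^d and c = (c_1,...,c_k) a capacity vector with c_i > 0 and Σc_i = 1. Suppose k sites move continuously on the time interval [0,1], remaining pairwise distinct on [0,1), and two sites x_1(t), x_2(t) both converge to the same point p_0 as t → 1. Let w(t) be the unique weight vector with w(t)·c = 0 such that the power diagram C(S(t), w(t)) has μ(C_i) = c_i for all i. Then the difference w_1(t) - w_2(t) converges to 0 as t → 1. -/
open MeasureTheory Filter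

theorem power_weights_coalesce (d k : ℕ)
    (μ : Measure (EuclideanSpace ℝ (Fin d))) [IsProbabilityMeasure μ]
    (hac : μ ≪ volume)
    (K : Set (EuclideanSpace ℝ (Fin d)))
    (hKconv : Convex ℝ K) (hKbdd : Bornology.IsBounded K)
    (hKfull : μ Kᶜ = 0)
    (hKpos : ∀ U : Set (EuclideanSpace ℝ (Fin d)),
      IsOpen U → U.Nonempty → U ⊆ interior K → 0 < μ U)
    (c : Fin k → ℝ) (hc_pos : ∀ i, 0 < c i) (hc_sum : ∑ i, c i = 1)
    -- the moving sites
    (S : ℝ → Fin k → EuclideanSpace ℝ (Fin d))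
    (hS_cont : ∀ i, ContinuousOn (fun t => S t i) (Set.Icc (0:ℝ) 1))
    (hS_distinct : ∀ t ∈ Set.Ico (0:ℝ) 1, Function.Injective (S t))
    -- two sites converge to the same point p₀
    (i₁ i₂ : Fin k) (hi : i₁ ≠ i₂) (p₀ : EuclideanSpace ℝ (Fin d))
    (hconv₁ : Tendsto (fun t => S t i₁) (nhdsWithin 1 (Set.Ico 0 1)) (nhds p₀))
    (hconv₂ : Tendsto (fun t => S t i₂) (nhdsWithin 1 (Set.Ico 0 1)) (nhds p₀))
    -- the weight vectors achieving the prescribed capacities, normalized by w · c = 0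
    (w : ℝ → Fin k → ℝ)
    (hw_norm : ∀ t ∈ Set.Ico (0:ℝ) 1, ∑ i, w t i * c i = 0)
    (hw_capacity : ∀ t ∈ Set.Ico (0:ℝ) 1, ∀ i : Fin k,
      μ {x : EuclideanSpace ℝ (Fin d) |
          ∀ j : Fin k, dist x (S t i) ^ 2 - w t i ≤ dist x (S t j) ^ 2 - w t j}
        = ENNReal.ofReal (c i)) :
    Tendsto (fun t => w t i₁ - w t i₂) (nhdsWithin 1 (Set.Ico 0 1)) (nhds 0) := by
  obtain ⟨R, hR⟩ := hKbdd.subset_closedBall p₀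
  set B : ℝ := 2 * max R 0 + 2 with hBdef
  have hB0 : (0:ℝ) ≤ B := by positivity
  -- key one-sided bound: the weight difference of two coalescing sites is
  -- bounded below by -(B * distance between the sites)
  have key : ∀ t ∈ Set.Ico (0:ℝ) 1, dist (S t i₁) p₀ ≤ 1 → dist (S t i₂) p₀ ≤ 1 →
      ∀ a b : Fin k, (a = i₁ ∧ b = i₂ ∨ a = i₂ ∧ b = i₁) →
      -(B * dist (S t i₁) (S t i₂)) ≤ w t a - w t b := by
    intro t ht h1 h2 a b hab
    by_contra hlt
    push_neg at hlt
    have hcell := hw_capacity t ht a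
    have hpa : dist p₀ (S t a) ≤ 1 := by
      rcases hab with ⟨ha, hb⟩ | ⟨ha, hb⟩ <;> subst ha <;>
        simpa [dist_comm] using (by assumption : dist (S t _) p₀ ≤ 1)
    have hpb : dist p₀ (S t b) ≤ 1 := by
      rcases hab with ⟨ha, hb⟩ | ⟨ha, hb⟩ <;> subst hb <;>
        simpa [dist_comm] using (by assumption : dist (S t _) p₀ ≤ 1)
    have hDab : dist (S t a) (S t b) = dist (S t i₁) (S t i₂) := by
      rcases hab with ⟨ha, hb⟩ | ⟨ha, hb⟩ <;> subst ha <;> subst hb <;>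
        simp [dist_comm]
    have hsub : {x : EuclideanSpace ℝ (Fin d) |
        ∀ j : Fin k, dist x (S t a) ^ 2 - w t a ≤ dist x (S t j) ^ 2 - w t j} ⊆ Kᶜ := by
      intro x hx hxK
      have hxb := hx b
      have hxp : dist x p₀ ≤ max R 0 :=
        le_max_of_le_left (by simpa [Metric.mem_closedBall] using hR hxK)
      have hda : dist x (S t a) ≤ max R 0 + 1 :=
        (dist_triangle x p₀ (S t a)).trans (by linarith)
      have hdb : dist x (S t b) ≤ max R 0 + 1 :=
        (dist_triangle x p₀ (S t b)).trans (by linarith)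
      have hD : dist x (S t b) ≤ dist x (S t a) + dist (S t a) (S t b) :=
        dist_triangle x (S t a) (S t b)
      have hDnn : (0:ℝ) ≤ dist (S t a) (S t b) := dist_nonneg
      have hdan : (0:ℝ) ≤ dist x (S t a) := dist_nonneg
      have hdbn : (0:ℝ) ≤ dist x (S t b) := dist_nonneg
      have h1' : 0 ≤ (dist x (S t a) - dist x (S t b) + dist (S t a) (S t b)) *
          (dist x (S t a) + dist x (S t b)) := mul_nonneg (by linarith) (by linarith)
      have h2' : 0 ≤ (B - (dist x (S t a) + dist x (S t b))) * dist (S t a) (S t b) :=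
        mul_nonneg (by simp only [hBdef]; linarith) hDnn
      rw [← hDab] at hlt
      nlinarith [h1', h2', hxb, hlt]
    have hμ : μ {x : EuclideanSpace ℝ (Fin d) |
        ∀ j : Fin k, dist x (S t a) ^ 2 - w t a ≤ dist x (S t j) ^ 2 - w t j} ≤ 0 :=
      hKfull ▸ measure_mono hsub
    rw [hcell, le_zero_iff, ENNReal.ofReal_eq_zero] at hμ
    exact absurd hμ (not_le.mpr (hc_pos a))
  -- finishing by squeezing
  have hdist : Tendsto (fun t => dist (S t i₁) (S t i₂))
      (nhdsWithin 1 (Set.Ico 0 1)) (nhds 0) := by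
    simpa using hconv₁.dist hconv₂
  refine squeeze_zero_norm' (a := fun t => B * dist (S t i₁) (S t i₂)) ?_ ?_
  · have e1 : ∀ᶠ t in nhdsWithin 1 (Set.Ico 0 1), dist (S t i₁) p₀ ≤ 1 := by
      have := hconv₁ (Metric.closedBall_mem_nhds p₀ one_pos)
      exact this
    have e2 : ∀ᶠ t in nhdsWithin 1 (Set.Ico 0 1), dist (S t i₂) p₀ ≤ 1 := by
      have := hconv₂ (Metric.closedBall_mem_nhds p₀ one_pos)
      exact this
    filter_upwards [self_mem_nhdsWithin, e1, e2] with t ht h1 h2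
    have k1 := key t ht h1 h2 i₁ i₂ (Or.inl ⟨rfl, rfl⟩)
    have k2 := key t ht h1 h2 i₂ i₁ (Or.inr ⟨rfl, rfl⟩)
    rw [Real.norm_eq_abs, abs_le]
    constructor <;> linarith
  · simpa using hdist.const_mul B
end

section
/- (Multiplicativity of equipartitions) Let a, b be positive integers. Suppose that for every family of d nice measures on R^d each of total mass a there exists a partition of R^d into a closed convex parts with pairwise disjoint interiors giving each part measure 1 in every measure, and similarly for total mass b. Then for every family of d nice measures on R^d each of total mass ab, there exists a partition of R^d into ab closed convex parts with pairwise disjoint interiors, each of measure 1 in every measure. -/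
open MeasureTheory ENNReal

/-- `μ` is a nice measure on `ℝ^d`: finite, absolutely continuous with respect to
Lebesgue measure, concentrated on a bounded convex set `K`, and positive on
nonempty open subsets of the interior of `K`. -/
def IsNiceMeasure {d : ℕ} (μ : Measure (EuclideanSpace ℝ (Fin d))) : Prop :=
  IsFiniteMeasure μ ∧ μ ≪ volume ∧
    ∃ K : Set (EuclideanSpace ℝ (Fin d)), Convex ℝ K ∧ Bornology.IsBounded K ∧
      μ Kᶜ = 0 ∧
      ∀ U : Set (EuclideanSpace ℝ (Fin d)),
        IsOpen U → U.Nonempty → U ⊆ interior K → 0 < μ U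

/-- Every family of `d` nice measures on `ℝ^d` of total mass `k` admits a partition of
`ℝ^d` into `k` closed convex parts with pairwise disjoint interiors, each part having
measure `1` in every measure. -/
def HasConvexEquipartition (d k : ℕ) : Prop :=
  ∀ μ : Fin d → Measure (EuclideanSpace ℝ (Fin d)),
    (∀ i, IsNiceMeasure (μ i)) → (∀ i, μ i Set.univ = k) →
    ∃ C : Fin k → Set (EuclideanSpace ℝ (Fin d)),
      (∀ j, IsClosed (C j)) ∧ (∀ j, Convex ℝ (C j)) ∧
      (Pairwise fun j j' => interior (C j) ∩ interior (C j') = ∅) ∧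
      (⋃ j, C j) = Set.univ ∧
      ∀ i j, μ i (C j) = 1

/-- Scaling a nice measure by a nonzero finite constant yields a nice measure. -/
lemma IsNiceMeasure.smul {d : ℕ} {μ : Measure (EuclideanSpace ℝ (Fin d))}
    (h : IsNiceMeasure μ) {c : ℝ≥0∞} (hc0 : c ≠ 0) (hctop : c ≠ ⊤) :
    IsNiceMeasure (c • μ) := by
  obtain ⟨hfin, hac, K, hKcv, hKb, hKc, hKpos⟩ := h
  refine ⟨⟨?_⟩, ?_, K, hKcv, hKb, ?_, ?_⟩
  · simp only [Measure.smul_apply, smul_eq_mul]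
    exact ENNReal.mul_lt_top hctop.lt_top (hfin.measure_univ_lt_top)
  · intro s hs
    simp [Measure.smul_apply, hac hs]
  · simp [Measure.smul_apply, hKc]
  · intro U hU hUne hUK
    simp only [Measure.smul_apply, smul_eq_mul]
    exact ENNReal.mul_pos hc0 (hKpos U hU hUne hUK).ne'

/-- The restriction of a nice measure to a closed convex set is nice. -/
lemma IsNiceMeasure.restrict {d : ℕ} {μ : Measure (EuclideanSpace ℝ (Fin d))}
    (h : IsNiceMeasure μ) {C : Set (EuclideanSpace ℝ (Fin d))}
    (hCcl : IsClosed C) (hCcv : Convex ℝ C) : IsNiceMeasure (μ.restrict C) := by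
  obtain ⟨hfin, hac, K, hKcv, hKb, hKc, hKpos⟩ := h
  haveI := hfin
  refine ⟨?_, (Measure.restrict_le_self).absolutelyContinuous.trans hac,
    K ∩ C, hKcv.inter hCcv, hKb.subset Set.inter_subset_left, ?_, ?_⟩
  · exact ⟨by rw [Measure.restrict_apply_univ]; exact measure_lt_top μ C⟩
  · have : (K ∩ C)ᶜ ∩ C ⊆ Kᶜ := by
      intro x hx
      simp only [Set.compl_inter, Set.mem_inter_iff, Set.mem_union, Set.mem_compl_iff] at hx ⊢
      rcases hx.1 with h1 | h1
      · exact h1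
      · exact absurd hx.2 h1
    rw [Measure.restrict_apply' hCcl.measurableSet]
    exact measure_mono_null this hKc
  · intro U hU hUne hUK
    rw [Measure.restrict_apply' hCcl.measurableSet]
    have hUC : U ∩ C = U := by
      apply Set.inter_eq_left.mpr
      exact hUK.trans ((interior_subset).trans Set.inter_subset_right)
    rw [hUC]
    exact hKpos U hU hUne (hUK.trans (interior_mono Set.inter_subset_left))

theorem equipartition_multiplicative (d a b : ℕ) (ha : 0 < a) (hb : 0 < b)
    (hA : HasConvexEquipartition d a) (hB : HasConvexEquipartition d b) :
    HasConvexEquipartition d (a * b) := by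
  intro μ hnice hmass
  have hb0 : (b : ℝ≥0∞) ≠ 0 := by exact_mod_cast hb.ne'
  have hbtop : (b : ℝ≥0∞) ≠ ⊤ := ENNReal.natCast_ne_top b
  set ν : Fin d → Measure (EuclideanSpace ℝ (Fin d)) := fun i => (b : ℝ≥0∞)⁻¹ • μ i with hν
  have hνnice : ∀ i, IsNiceMeasure (ν i) := fun i =>
    (hnice i).smul (ENNReal.inv_ne_zero.mpr hbtop) (ENNReal.inv_ne_top.mpr hb0)
  have hνmass : ∀ i, ν i Set.univ = a := by
    intro i
    simp only [hν, Measure.smul_apply, smul_eq_mul, hmass i]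
    push_cast
    rw [mul_comm (a : ℝ≥0∞), ← mul_assoc, ENNReal.inv_mul_cancel hb0 hbtop, one_mul]
  obtain ⟨C, hCcl, hCcv, hCdisj, hCun, hC1⟩ := hA ν hνnice hνmass
  have hCmass : ∀ i j, μ i (C j) = b := by
    intro i j
    have h1 := hC1 i j
    simp only [hν, Measure.smul_apply, smul_eq_mul] at h1
    have h2 := congrArg (fun x => (b : ℝ≥0∞) * x) h1
    simp only [← mul_assoc, ENNReal.mul_inv_cancel hb0 hbtop, one_mul, mul_one] at h2
    exact h2
  have hrestr : ∀ j, ∃ D : Fin b → Set (EuclideanSpace ℝ (Fin d)),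
      (∀ m, IsClosed (D m)) ∧ (∀ m, Convex ℝ (D m)) ∧
      (Pairwise fun m m' => interior (D m) ∩ interior (D m') = ∅) ∧
      (⋃ m, D m) = Set.univ ∧ ∀ i m, (μ i).restrict (C j) (D m) = 1 := by
    intro j
    refine hB (fun i => (μ i).restrict (C j))
      (fun i => (hnice i).restrict (hCcl j) (hCcv j)) (fun i => ?_)
    rw [Measure.restrict_apply_univ]
    exact hCmass i j
  choose D hDcl hDcv hDdisj hDun hD1 using hrestr
  set e := finProdFinEquiv (m := a) (n := b) with he
  refine ⟨fun k => C (e.symm k).1 ∩ D (e.symm k).1 (e.symm k).2, ?_, ?_, ?_, ?_, ?_⟩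
  · exact fun k => (hCcl _).inter (hDcl _ _)
  · exact fun k => (hCcv _).inter (hDcv _ _)
  · intro k k' hkk'
    have hne : e.symm k ≠ e.symm k' := fun h => hkk' (e.symm.injective h)
    set p := e.symm k
    set p' := e.symm k'
    apply Set.eq_empty_of_subset_empty
    intro x hx
    have hx1 : x ∈ interior (C p.1) ∩ interior (D p.1 p.2) :=
      ⟨interior_mono Set.inter_subset_left hx.1, interior_mono Set.inter_subset_right hx.1⟩
    have hx2 : x ∈ interior (C p'.1) ∩ interior (D p'.1 p'.2) :=
      ⟨interior_mono Set.inter_subset_left hx.2, interior_mono Set.inter_subset_right hx.2⟩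
    by_cases hj : p.1 = p'.1
    · have hm : p.2 ≠ p'.2 := by
        intro hm
        exact hne (Prod.ext hj hm)
      rw [hj] at hx1
      have hmm : x ∈ interior (D p'.1 p.2) ∩ interior (D p'.1 p'.2) := ⟨hx1.2, hx2.2⟩
      rw [hDdisj p'.1 hm] at hmm
      exact hmm
    · have := hCdisj hj
      have hmem : x ∈ interior (C p.1) ∩ interior (C p'.1) := ⟨hx1.1, hx2.1⟩
      rw [this] at hmem
      exact hmem
  · apply Set.eq_univ_of_forall
    intro x
    have hx : x ∈ ⋃ j, C j := by rw [hCun]; trivial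
    obtain ⟨j, hj⟩ := Set.mem_iUnion.mp hx
    have hx' : x ∈ ⋃ m, D j m := by rw [hDun j]; trivial
    obtain ⟨m, hm⟩ := Set.mem_iUnion.mp hx'
    refine Set.mem_iUnion.mpr ⟨e (j, m), ?_⟩
    simp only [Equiv.symm_apply_apply]
    exact ⟨hj, hm⟩
  · intro i k
    have h1 := hD1 (e.symm k).1 i (e.symm k).2
    rw [Measure.restrict_apply' (hCcl _).measurableSet] at h1
    show μ i (C (e.symm k).1 ∩ D (e.symm k).1 (e.symm k).2) = 1
    rw [Set.inter_comm]
    exact h1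
end

section
/- A partition of R^d into two closed convex sets with disjoint interiors is given by a hyperplane: if C_1, C_2 are closed convex sets with disjoint nonempty interiors and C_1 ∪ C_2 = R^d, then there is a hyperplane H such that C_1 and C_2 are the two closed halfspaces bounded by H. -/
open Filter Set Topology

theorem two_convex_parts_is_halfspace_pair (d : ℕ)
    (C₁ C₂ : Set (EuclideanSpace ℝ (Fin d)))
    (h₁closed : IsClosed C₁) (h₂closed : IsClosed C₂)
    (h₁conv : Convex ℝ C₁) (h₂conv : Convex ℝ C₂)
    (h₁int : (interior C₁).Nonempty) (h₂int : (interior C₂).Nonempty)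
    (hdisj : interior C₁ ∩ interior C₂ = ∅)
    (hcover : C₁ ∪ C₂ = Set.univ) :
    ∃ (a : EuclideanSpace ℝ (Fin d)) (b : ℝ), a ≠ 0 ∧
      C₁ = {x | inner ℝ a x ≤ b} ∧ C₂ = {x | b ≤ inner ℝ a x} := by
  obtain ⟨f, s, hf₁, hf₂⟩ := geometric_hahn_banach_open_open h₁conv.interior isOpen_interior
    h₂conv.interior isOpen_interior (Set.disjoint_iff_inter_eq_empty.mpr hdisj)
  -- membership in C implies closure bound
  have bnd : ∀ (C : Set (EuclideanSpace ℝ (Fin d))), Convex ℝ C →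
      ∀ (g : EuclideanSpace ℝ (Fin d) →L[ℝ] ℝ) (u : ℝ), (∀ z ∈ interior C, g z < u) →
      (interior C).Nonempty → ∀ x ∈ C, g x ≤ u := by
    intro C hconv g u hg ⟨y, hy⟩ x hx
    have hc : Filter.Tendsto (fun t : ℝ => x + t • (y - x)) (𝓝[>] (0:ℝ)) (𝓝 x) := by
      have : Continuous fun t : ℝ => x + t • (y - x) := by continuity
      simpa using (this.tendsto 0).mono_left nhdsWithin_le_nhds
    refine le_of_tendsto ((g.continuous.tendsto x).comp hc) ?_
    filter_upwards [Ioc_mem_nhdsGT one_pos] with t ht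
    exact (hg _ (hconv.add_smul_sub_mem_interior hx hy ht)).le
  have hC₁sub : ∀ x ∈ C₁, f x ≤ s := bnd C₁ h₁conv f s hf₁ h₁int
  have hC₂sub : ∀ x ∈ C₂, s ≤ f x := by
    have h := bnd C₂ h₂conv (-f) (-s) (by intro z hz; simpa using (hf₂ z hz)) h₂int
    intro x hx
    have := h x hx
    simp at this
    linarith
  -- complement arguments
  have hsub1 : ∀ x, f x ≤ s → x ∈ C₁ := by
    intro x hx
    by_contra hxc
    have hx2 : C₁ᶜ ⊆ C₂ := by
      intro z hz
      have : z ∈ C₁ ∪ C₂ := hcover ▸ Set.mem_univ z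
      exact this.resolve_left hz
    have : x ∈ interior C₂ := interior_mono hx2 (h₁closed.isOpen_compl.subset_interior_iff.mpr subset_rfl hxc)
    exact absurd hx (not_le.mpr (hf₂ x this))
  have hsub2 : ∀ x, s ≤ f x → x ∈ C₂ := by
    intro x hx
    by_contra hxc
    have hx2 : C₂ᶜ ⊆ C₁ := by
      intro z hz
      have : z ∈ C₁ ∪ C₂ := hcover ▸ Set.mem_univ z
      exact this.resolve_right hz
    have : x ∈ interior C₁ := interior_mono hx2 (h₂closed.isOpen_compl.subset_interior_iff.mpr subset_rfl hxc)
    exact absurd hx (not_le.mpr (hf₁ x this))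
  set a := (InnerProductSpace.toDual ℝ (EuclideanSpace ℝ (Fin d))).symm f with ha
  have hfa : ∀ x, inner ℝ a x = f x := by
    intro x
    simp [ha, InnerProductSpace.toDual_symm_apply]
  refine ⟨a, s, ?_, ?_, ?_⟩
  · obtain ⟨y, hy⟩ := h₁int
    obtain ⟨z, hz⟩ := h₂int
    intro h0
    have h1 : f y < s := hf₁ y hy
    have h2 : s < f z := hf₂ z hz
    have : f y = 0 ∧ f z = 0 := by
      constructor <;> [rw [← hfa y]; rw [← hfa z]] <;> simp [h0]
    linarith [this.1, this.2]
  · ext x; simp only [Set.mem_setOf_eq, hfa]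
    exact ⟨fun h => hC₁sub x h, hsub1 x⟩
  · ext x; simp only [Set.mem_setOf_eq, hfa]
    exact ⟨fun h => hC₂sub x h, hsub2 x⟩
end
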